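/- Let n ≥ 1, suppose f : ℝ^n → ℝ, V, W satisfy Assumption (A1) with constants λ₁, λ₂, λ₃, λ₄, c₁, c₂, let v : [0,∞) → ℝ be continuously differentiable with sup_{t≥0}(|v(t)| + |v'(t)|) ≤ M for some M > 0, fix θ ∈ (0,1) and define R₀ = { r ≥ 1 : 1/r + 1/(2 r^{2n−1}) ≤ θ λ₃ / λ₂ }. Fix an initial value x⁰ ∈ ℝ^n and T > 0. Then there exists a constant Γ > 0, independent of r, such that for every r ∈ R₀ and every differentiable x : [0,∞) → ℝ^n with x(0) = x⁰ satisfying the noise-free tracking differentiator x_i'(t) = x_{i+1}(t) for i = 1,…,n−1 and x_n'(t) = r^n f(x₁(t) − v(t), x₂(t)/r, …, x_n(t)/r^{n−1}), one has |x₁(t) − v(t)|² ≤ Γ / r for all t ≥ T. -/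

import Mathlib

open scoped BigOperators

/-- Assumption (A1) of the paper (0-based indices; see the paper). -/
structure AssumptionA1 (n : ℕ) (f : EuclideanSpace ℝ (Fin n) → ℝ)
    (V W : EuclideanSpace ℝ (Fin n) → ℝ)
    (l1 l2 l3 l4 c1 c2 : ℝ) : Prop where
  l1_pos : 0 < l1
  l2_pos : 0 < l2
  l3_pos : 0 < l3
  l4_pos : 0 < l4
  c1_pos : 0 < c1
  c2_pos : 0 < c2
  f_locallyLipschitz : LocallyLipschitz f
  f_zero : f 0 = 0
  V_contDiff : ContDiff ℝ 2 V
  W_continuous : Continuous W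
  V_lower : ∀ z : EuclideanSpace ℝ (Fin n), l1 * ‖z‖ ^ 2 ≤ V z
  V_upper : ∀ z : EuclideanSpace ℝ (Fin n), V z ≤ l2 * ‖z‖ ^ 2
  W_lower : ∀ z : EuclideanSpace ℝ (Fin n), l3 * ‖z‖ ^ 2 ≤ W z
  W_upper : ∀ z : EuclideanSpace ℝ (Fin n), W z ≤ l4 * ‖z‖ ^ 2
  lyapunov : ∀ z : EuclideanSpace ℝ (Fin n),
    (∑ i : Fin n, fderiv ℝ V z (EuclideanSpace.single i 1) *
      (if h : (i : ℕ) + 1 < n then z ⟨(i : ℕ) + 1, h⟩ else f z)) ≤ -W z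
  grad_bound : ∀ z : EuclideanSpace ℝ (Fin n), ∀ j : Fin n,
    ((j : ℕ) = 0 ∨ (j : ℕ) = n - 1) →
    |fderiv ℝ V z (EuclideanSpace.single j 1)| ≤ c1 * ‖z‖
  hess_bound : ∀ z : EuclideanSpace ℝ (Fin n), ∀ j : Fin n,
    ((j : ℕ) = 0 ∨ (j : ℕ) = n - 1) →
    |fderiv ℝ (fun w => fderiv ℝ V w (EuclideanSpace.single j 1)) z
      (EuclideanSpace.single j 1)| ≤ c2

/-- Right-hand side of the noise-free tracking differentiator with gain `r` and
input `v`: `xᵢ' = x_{i+1}` (`i = 1,…,n−1`),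
`x_n' = rⁿ f(x₁ − v(t), x₂/r, …, x_n/r^{n−1})` (0-based indices). -/
noncomputable def tdField (n : ℕ) (f : EuclideanSpace ℝ (Fin n) → ℝ) (v : ℝ → ℝ)
    (r t : ℝ) (w : EuclideanSpace ℝ (Fin n)) : EuclideanSpace ℝ (Fin n) :=
  (WithLp.equiv 2 (Fin n → ℝ)).symm fun i : Fin n =>
    if h : (i : ℕ) + 1 < n then w ⟨(i : ℕ) + 1, h⟩
    else r ^ n * f ((WithLp.equiv 2 (Fin n → ℝ)).symm fun j : Fin n =>
      (w j - if (j : ℕ) = 0 then v t else 0) / r ^ (j : ℕ))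

private lemma td_clm_eval_sum (n : ℕ) (L : EuclideanSpace ℝ (Fin n) →L[ℝ] ℝ)
    (w : EuclideanSpace ℝ (Fin n)) :
    L w = ∑ i, w i * L (EuclideanSpace.single i 1) := by
  have hrepr : w = ∑ i, w i • EuclideanSpace.single i (1:ℝ) := by
    have := (EuclideanSpace.basisFun (Fin n) ℝ).sum_repr w
    simp only [EuclideanSpace.basisFun_repr, EuclideanSpace.basisFun_apply] at this
    exact this.symm
  conv_lhs => rw [hrepr]
  rw [map_sum]
  simp [smul_eq_mul]

private lemma td_norm_sq_eq (n : ℕ) (w : EuclideanSpace ℝ (Fin n)) :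
    ‖w‖ ^ 2 = ∑ i, (w i) ^ 2 := by
  rw [EuclideanSpace.norm_eq, Real.sq_sqrt]
  · simp [sq_abs]
  · positivity

private lemma td_coord_sq_le (n : ℕ) (w : EuclideanSpace ℝ (Fin n)) (i : Fin n) :
    (w i) ^ 2 ≤ ‖w‖ ^ 2 := by
  rw [td_norm_sq_eq]
  exact Finset.single_le_sum (f := fun j => (w j)^2) (fun j _ => sq_nonneg _)
    (Finset.mem_univ i)

private lemma td_comp_bound (a d rp Mv : ℝ) (h1 : 1 ≤ rp) (hd : d ^ 2 ≤ Mv ^ 2) :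
    ((a - d) / rp) ^ 2 ≤ 2 * a ^ 2 + 2 * Mv ^ 2 := by
  have hrp : (1:ℝ) ≤ rp ^ 2 := one_le_pow₀ h1
  have h2 : ((a - d) / rp) ^ 2 = (a - d) ^ 2 / rp ^ 2 := div_pow _ _ _
  have h3 : (a - d) ^ 2 / rp ^ 2 ≤ (a - d) ^ 2 := div_le_self (sq_nonneg _) hrp
  nlinarith [sq_nonneg (a + d)]

private lemma td_gronwall (g g' : ℝ → ℝ) (c d : ℝ) (hc : 0 < c) (hd : 0 ≤ d)
    (hg : ∀ t, 0 ≤ t → HasDerivAt g (g' t) t)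
    (hle : ∀ t, 0 ≤ t → g' t ≤ -c * g t + d)
    {t : ℝ} (ht : 0 ≤ t) : g t ≤ g 0 * Real.exp (-c * t) + d / c := by
  set h : ℝ → ℝ := fun s => (g s - d / c) * Real.exp (c * s) with hh
  have hderiv : ∀ s, 0 ≤ s →
      HasDerivAt h ((g' s + c * (g s - d / c)) * Real.exp (c * s)) s := by
    intro s hs
    have h1 : HasDerivAt (fun s => g s - d / c) (g' s) s := (hg s hs).sub_const _
    have h2 : HasDerivAt (fun s => Real.exp (c * s)) (c * Real.exp (c * s)) s := by
      simpa [mul_comm, Function.comp_def] using (Real.hasDerivAt_exp (c * s)).comp s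
        ((hasDerivAt_id s).const_mul c)
    have : HasDerivAt h (g' s * Real.exp (c * s) + (g s - d / c) * (c * Real.exp (c * s))) s := h1.mul h2
    convert this using 1
    ring
  have hanti : AntitoneOn h (Set.Ici 0) := by
    apply antitoneOn_of_deriv_nonpos (convex_Ici 0)
    · exact fun s hs => (hderiv s hs).continuousAt.continuousWithinAt
    · intro s hs
      rw [interior_Ici] at hs
      exact (hderiv s hs.le).differentiableAt.differentiableWithinAt
    · intro s hs
      rw [interior_Ici] at hs
      rw [(hderiv s hs.le).deriv]
      have := hle s hs.le
      have hexp : (0:ℝ) < Real.exp (c * s) := Real.exp_pos _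
      have hcd : c * (d / c) = d := mul_div_cancel₀ d hc.ne'
      nlinarith [hexp.le]
  have key : h t ≤ h 0 := hanti (by simp) ht ht
  simp only [hh, mul_zero, Real.exp_zero, mul_one] at key
  have hexp : (0:ℝ) < Real.exp (c * t) := Real.exp_pos _
  have h2 : g t - d / c ≤ (g 0 - d / c) * Real.exp (-c * t) := by
    have := mul_le_mul_of_nonneg_right key (le_of_lt (inv_pos.2 hexp))
    rw [mul_assoc, mul_inv_cancel₀ hexp.ne', mul_one] at this
    rw [neg_mul, Real.exp_neg]
    exact this
  have h3 : (g 0 - d / c) * Real.exp (-c * t) ≤ g 0 * Real.exp (-c * t) := by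
    have : (0:ℝ) ≤ d / c := div_nonneg hd hc.le
    nlinarith [Real.exp_pos (-c * t)]
  linarith

/-- under Assumption (A1), for bounded `C¹` input `v`, `θ ∈ (0,1)`,
and `R₀ = {r ≥ 1 : 1/r + 1/(2r^{2n−1}) ≤ θλ₃/λ₂}`, for fixed initial value `x⁰`
and `T > 0` there is a constant `Γ > 0`, independent of `r`, such that every
solution of the noise-free tracking differentiator with gain `r ∈ R₀` and
`x(0) = x⁰` satisfies `|x₁(t) − v(t)|² ≤ Γ/r` for all `t ≥ T`. -/
theorem td_tracking_error_bound
    (n : ℕ) (hn : 1 ≤ n)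
    (f V W : EuclideanSpace ℝ (Fin n) → ℝ) (l1 l2 l3 l4 c1 c2 : ℝ)
    (hA1 : AssumptionA1 n f V W l1 l2 l3 l4 c1 c2)
    (v : ℝ → ℝ) (hv : ContDiff ℝ 1 v) (M : ℝ) (hM : 0 < M)
    (hvM : ∀ t : ℝ, 0 ≤ t → |v t| + |deriv v t| ≤ M)
    (θ : ℝ) (hθ : θ ∈ Set.Ioo (0 : ℝ) 1)
    (x0 : EuclideanSpace ℝ (Fin n)) (T : ℝ) (hT : 0 < T) :
    ∃ Γ : ℝ, 0 < Γ ∧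
      ∀ r : ℝ, (1 ≤ r ∧ 1 / r + 1 / (2 * r ^ (2 * n - 1)) ≤ θ * l3 / l2) →
        ∀ x : ℝ → EuclideanSpace ℝ (Fin n), x 0 = x0 →
          (∀ t : ℝ, 0 ≤ t → HasDerivAt x (tdField n f v r t (x t)) t) →
          ∀ t : ℝ, T ≤ t → |x t ⟨0, hn⟩ - v t| ^ 2 ≤ Γ / r := by
    classical
  obtain ⟨hθ0, hθ1⟩ := hθ
  have hl1 := hA1.l1_pos; have hl2 := hA1.l2_pos; have hl3 := hA1.l3_pos
  have hc1 := hA1.c1_pos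
  set β : ℝ := l3 / (2 * l2) with hβ
  have hβpos : 0 < β := by positivity
  set K : ℝ := M ^ 2 * c1 ^ 2 / (2 * l3) with hK
  have hKpos : 0 < K := by positivity
  set B : ℝ := l2 * (2 * ‖x0‖ ^ 2 + 2 * n * M ^ 2) with hB
  have hBpos : 0 < B := by
    have : (1:ℝ) ≤ n := by exact_mod_cast hn
    have h1 : (0:ℝ) < 2 * n * M ^ 2 := by nlinarith
    nlinarith [norm_nonneg x0, sq_nonneg ‖x0‖]
  refine ⟨(B / (β * T) + K / β) / l1 + 1, by positivity, ?_⟩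
  rintro r ⟨hr1, -⟩ x hx0 hx
  have hr0 : (0:ℝ) < r := lt_of_lt_of_le one_pos hr1
  -- the scaled error variable
  set z : ℝ → EuclideanSpace ℝ (Fin n) := fun t =>
    (WithLp.equiv 2 (Fin n → ℝ)).symm fun i : Fin n =>
      (x t i - if (i : ℕ) = 0 then v t else 0) / r ^ (i : ℕ) with hz_def
  have hz_apply : ∀ t (i : Fin n),
      z t i = (x t i - if (i : ℕ) = 0 then v t else 0) / r ^ (i : ℕ) := fun _ _ => rfl
  set zdot : ℝ → EuclideanSpace ℝ (Fin n) := fun t =>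
    (WithLp.equiv 2 (Fin n → ℝ)).symm fun i : Fin n =>
      r * (if h : (i : ℕ) + 1 < n then z t ⟨(i : ℕ) + 1, h⟩ else f (z t)) -
        (if (i : ℕ) = 0 then deriv v t else 0) with hzdot_def
  have hzdot_apply : ∀ t (i : Fin n),
      zdot t i = r * (if h : (i : ℕ) + 1 < n then z t ⟨(i : ℕ) + 1, h⟩ else f (z t)) -
        (if (i : ℕ) = 0 then deriv v t else 0) := fun _ _ => rfl
  -- the argument of f in tdField equals z t
  have harg : ∀ t, ((WithLp.equiv 2 (Fin n → ℝ)).symm fun j : Fin n =>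
      (x t j - if (j : ℕ) = 0 then v t else 0) / r ^ (j : ℕ)) = z t := fun _ => rfl
  have hvd : ∀ t : ℝ, HasDerivAt v (deriv v t) t := fun t =>
    ((hv.differentiable one_ne_zero) t).hasDerivAt
  -- derivative value identity
  have hkey : ∀ t (i : Fin n),
      (tdField n f v r t (x t) i - (if (i : ℕ) = 0 then deriv v t else 0)) / r ^ (i : ℕ)
        = zdot t i := by
    intro t i
    rw [hzdot_apply]
    show ((if h : (i : ℕ) + 1 < n then x t ⟨(i : ℕ) + 1, h⟩
        else r ^ n * f (z t)) - (if (i : ℕ) = 0 then deriv v t else 0)) / r ^ (i : ℕ) = _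
    by_cases h : (i : ℕ) + 1 < n
    · rw [dif_pos h, dif_pos h]
      have hz1 : z t ⟨(i : ℕ) + 1, h⟩ = x t ⟨(i : ℕ) + 1, h⟩ / r ^ ((i : ℕ) + 1) := by
        rw [hz_apply]; simp
      rw [hz1]
      by_cases h0 : (i : ℕ) = 0
      · have e1 : r ^ (i : ℕ) = 1 := by rw [h0, pow_zero]
        have e2 : r ^ ((i : ℕ) + 1) = r := by rw [h0, pow_one]
        rw [if_pos h0, e1, e2]
        field_simp
      · rw [if_neg h0, pow_succ]
        field_simp
        ring
    · rw [dif_neg h, dif_neg h]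
      have hn1 : n = (i : ℕ) + 1 := by omega
      have e3 : r ^ n = r ^ (i : ℕ) * r := by
        rw [← pow_succ]
        exact congrArg (r ^ ·) hn1
      by_cases h0 : (i : ℕ) = 0
      · have e1 : r ^ (i : ℕ) = 1 := by rw [h0, pow_zero]
        rw [if_pos h0, e3, e1]
        field_simp
      · rw [if_neg h0, e3]
        field_simp
        ring
  -- z is differentiable with derivative zdot
  have hz : ∀ t : ℝ, 0 ≤ t → HasDerivAt z (zdot t) t := by
    intro t ht
    have hcomp : ∀ i : Fin n, HasDerivAt (fun s => x s i) (tdField n f v r t (x t) i) t := by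
      intro i
      have h := ((PiLp.continuousLinearEquiv 2 ℝ
        (fun _ : Fin n => ℝ)).toContinuousLinearMap.hasFDerivAt).comp_hasDerivAt t (hx t ht)
      exact hasDerivAt_pi.mp h i
    have hzi : ∀ i : Fin n, HasDerivAt (fun s => z s i) (zdot t i) t := by
      intro i
      have hsub : HasDerivAt (fun s => x s i - if (i : ℕ) = 0 then v s else 0)
          (tdField n f v r t (x t) i - if (i : ℕ) = 0 then deriv v t else 0) t := by
        refine (hcomp i).sub ?_
        by_cases h0 : (i : ℕ) = 0
        · simp only [if_pos h0]; exact hvd t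
        · simp only [if_neg h0]; exact hasDerivAt_const t 0
      have := hsub.div_const (r ^ (i : ℕ))
      rw [hkey t i] at this
      exact this
    have h2 : HasDerivAt (fun s => (PiLp.continuousLinearEquiv 2 ℝ (fun _ : Fin n => ℝ)) (z s))
        ((PiLp.continuousLinearEquiv 2 ℝ (fun _ : Fin n => ℝ)) (zdot t)) t :=
      hasDerivAt_pi.mpr hzi
    have := ((PiLp.continuousLinearEquiv 2 ℝ
      (fun _ : Fin n => ℝ)).symm.toContinuousLinearMap.hasFDerivAt).comp_hasDerivAt t h2
    simpa [Function.comp_def] using this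
  -- the Lyapunov function along the solution
  set g : ℝ → ℝ := fun t => V (z t) with hg_def
  set g' : ℝ → ℝ := fun t => fderiv ℝ V (z t) (zdot t) with hg'_def
  have hVd : ∀ p, HasFDerivAt V (fderiv ℝ V p) p := fun p =>
    ((hA1.V_contDiff.differentiable (by norm_num)) p).hasFDerivAt
  have hgd : ∀ t, 0 ≤ t → HasDerivAt g (g' t) t := fun t ht =>
    (hVd (z t)).comp_hasDerivAt t (hz t ht)
  have i0 : Fin n := ⟨0, hn⟩
  -- derivative bound
  have hgb : ∀ t, 0 ≤ t → g' t ≤ -(β * r) * g t + K / r := by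
    intro t ht
    have hM' : |deriv v t| ≤ M := by
      have := hvM t ht
      have := abs_nonneg (v t)
      linarith
    set D : Fin n → ℝ := fun i => fderiv ℝ V (z t) (EuclideanSpace.single i 1) with hD
    have hsum : g' t = ∑ i, zdot t i * D i := td_clm_eval_sum n _ _
    have hsplit : g' t = r * (∑ i : Fin n,
        D i * (if h : (i : ℕ) + 1 < n then z t ⟨(i : ℕ) + 1, h⟩ else f (z t)))
        - deriv v t * D ⟨0, hn⟩ := by
      rw [hsum]
      have : ∀ i : Fin n, zdot t i * D i =
          r * (D i * (if h : (i : ℕ) + 1 < n then z t ⟨(i : ℕ) + 1, h⟩ else f (z t)))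
          - (if i = ⟨0, hn⟩ then deriv v t * D i else 0) := by
        intro i
        rw [hzdot_apply]
        have : ((i : ℕ) = 0) ↔ (i = ⟨0, hn⟩) := by
          constructor
          · intro h; exact Fin.ext h
          · intro h; rw [h]
        by_cases h0 : i = ⟨0, hn⟩
        · rw [if_pos h0, if_pos (this.mpr h0)]; ring
        · rw [if_neg h0, if_neg (fun hc => h0 (this.mp hc))]; ring
      rw [Finset.sum_congr rfl (fun i _ => this i), Finset.sum_sub_distrib,
        ← Finset.mul_sum, Finset.sum_ite_eq' Finset.univ (⟨0, hn⟩ : Fin n)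
          (fun i => deriv v t * D i), if_pos (Finset.mem_univ _)]
    have hlyap : (∑ i : Fin n,
        D i * (if h : (i : ℕ) + 1 < n then z t ⟨(i : ℕ) + 1, h⟩ else f (z t)))
        ≤ -W (z t) := hA1.lyapunov (z t)
    have hD0 : |D ⟨0, hn⟩| ≤ c1 * ‖z t‖ := hA1.grad_bound (z t) ⟨0, hn⟩ (Or.inl rfl)
    have hterm : -(deriv v t * D ⟨0, hn⟩) ≤ M * (c1 * ‖z t‖) := by
      calc -(deriv v t * D ⟨0, hn⟩) ≤ |deriv v t * D ⟨0, hn⟩| := neg_le_abs _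
        _ = |deriv v t| * |D ⟨0, hn⟩| := abs_mul _ _
        _ ≤ M * (c1 * ‖z t‖) := by
            apply mul_le_mul hM' hD0 (abs_nonneg _)
            exact hM.le
    have hW : l3 * ‖z t‖ ^ 2 ≤ W (z t) := hA1.W_lower (z t)
    have hVu : g t ≤ l2 * ‖z t‖ ^ 2 := hA1.V_upper (z t)
    have hVl : l1 * ‖z t‖ ^ 2 ≤ g t := hA1.V_lower (z t)
    set s := ‖z t‖ with hs
    have hs0 : 0 ≤ s := norm_nonneg _
    have hyoung : M * (c1 * s) ≤ (r * l3 / 2) * s ^ 2 + K / r := by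
      have hKr : K / r = M ^ 2 * c1 ^ 2 / (2 * l3 * r) := by
        rw [hK, div_div]
      rw [hKr, ← sub_nonneg]
      have heq : (r * l3 / 2) * s ^ 2 + M ^ 2 * c1 ^ 2 / (2 * l3 * r) - M * (c1 * s)
          = ((r * l3 * s - M * c1) ^ 2 + (2 * l3 * r * (M * c1 * s) - 2 * r * l3 * (M * c1 * s))) / (2 * l3 * r) := by
        field_simp
        ring
      rw [heq]
      have h2 : (2 : ℝ) * l3 * r * (M * c1 * s) - 2 * r * l3 * (M * c1 * s) = 0 := by ring
      rw [h2, add_zero]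
      positivity
    have hβr : β * r * g t ≤ (r * l3 / 2) * s ^ 2 := by
      rw [hβ]
      have h1 : l3 / (2 * l2) * r * g t ≤ l3 / (2 * l2) * r * (l2 * s ^ 2) := by
        apply mul_le_mul_of_nonneg_left hVu (by positivity)
      calc l3 / (2 * l2) * r * g t ≤ l3 / (2 * l2) * r * (l2 * s ^ 2) := h1
        _ = (r * l3 / 2) * s ^ 2 := by field_simp
    calc g' t = r * (∑ i : Fin n,
          D i * (if h : (i : ℕ) + 1 < n then z t ⟨(i : ℕ) + 1, h⟩ else f (z t)))
          - deriv v t * D ⟨0, hn⟩ := hsplit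
      _ ≤ r * (-W (z t)) + M * (c1 * s) := by
          have := mul_le_mul_of_nonneg_left hlyap hr0.le
          linarith
      _ ≤ r * (-(l3 * s ^ 2)) + ((r * l3 / 2) * s ^ 2 + K / r) := by
          have := mul_le_mul_of_nonneg_left (neg_le_neg hW) hr0.le
          rw [mul_neg, mul_neg] at this ⊢
          linarith
      _ = -((r * l3 / 2) * s ^ 2) + K / r := by ring
      _ ≤ -(β * r * g t) + K / r := by linarith
      _ = -(β * r) * g t + K / r := by ring
  -- Gronwall
  have hgron : ∀ t, 0 ≤ t → g t ≤ g 0 * Real.exp (-(β * r) * t) + (K / r) / (β * r) :=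
    fun t ht => td_gronwall g g' (β * r) (K / r) (by positivity) (by positivity) hgd hgb ht
  -- bound on g 0
  have hv0 : |v 0| ≤ M := by
    have := hvM 0 le_rfl
    have := abs_nonneg (deriv v 0)
    linarith
  have hg0 : g 0 ≤ B := by
    have hznorm : ‖z 0‖ ^ 2 ≤ 2 * ‖x0‖ ^ 2 + 2 * n * M ^ 2 := by
      rw [td_norm_sq_eq]
      have hcomp : ∀ i : Fin n, (z 0 i) ^ 2 ≤ 2 * (x0 i) ^ 2 + 2 * M ^ 2 := by
        intro i
        rw [hz_apply, hx0]
        refine td_comp_bound _ _ _ _ (one_le_pow₀ hr1) ?_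
        split_ifs with h
        · rw [← sq_abs (v 0)]
          exact pow_le_pow_left₀ (abs_nonneg _) hv0 2
        · simpa using sq_nonneg M
      calc ∑ i, (z 0 i) ^ 2 ≤ ∑ i : Fin n, (2 * (x0 i) ^ 2 + 2 * M ^ 2) :=
            Finset.sum_le_sum (fun i _ => hcomp i)
        _ = 2 * (∑ i, (x0 i) ^ 2) + n * (2 * M ^ 2) := by
            rw [Finset.sum_add_distrib, ← Finset.mul_sum, Finset.sum_const,
              Finset.card_univ, Fintype.card_fin, nsmul_eq_mul]
        _ = 2 * ‖x0‖ ^ 2 + 2 * n * M ^ 2 := by rw [← td_norm_sq_eq]; ring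
    calc g 0 ≤ l2 * ‖z 0‖ ^ 2 := hA1.V_upper (z 0)
      _ ≤ l2 * (2 * ‖x0‖ ^ 2 + 2 * n * M ^ 2) := by
          apply mul_le_mul_of_nonneg_left hznorm hl2.le
      _ = B := rfl
  -- final estimate
  intro t ht
  have ht0 : 0 ≤ t := le_trans hT.le ht
  have hg0nn : 0 ≤ g 0 := le_trans (by positivity) (hA1.V_lower (z 0))
  have hbrT : 0 < β * r * T := by positivity
  have hexpT : Real.exp (-(β * r) * t) ≤ 1 / (β * r * T) := by
    have h1 : β * r * T ≤ β * r * t :=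
      mul_le_mul_of_nonneg_left ht (by positivity)
    have h2 : β * r * T ≤ Real.exp (β * r * t) := by
      have := Real.add_one_le_exp (β * r * t)
      linarith
    rw [neg_mul, Real.exp_neg, one_div]
    exact inv_anti₀ hbrT h2
  have hgt := hgron t ht0
  have hfin1 : g t ≤ B * (1 / (β * r * T)) + (K / r) / (β * r) := by
    have e1 : g 0 * Real.exp (-(β * r) * t) ≤ B * (1 / (β * r * T)) :=
      mul_le_mul hg0 hexpT (Real.exp_pos _).le hBpos.le
    linarith
  have hfrac : B * (1 / (β * r * T)) + (K / r) / (β * r)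
      ≤ (B / (β * T) + K / β) / r := by
    have h1 : B * (1 / (β * r * T)) = (B / (β * T)) / r := by
      rw [mul_one_div, div_div]; congr 1; ring
    have h2 : (K / r) / (β * r) ≤ (K / β) / r := by
      have hpos : (0:ℝ) < β * r := by positivity
      have hle : β * r ≤ r * (β * r) := le_mul_of_one_le_left hpos.le hr1
      have hA : (K / r) / (β * r) = K / (r * (β * r)) := div_div _ _ _
      have hB2 : (K / β) / r = K / (β * r) := div_div _ _ _
      rw [hA, hB2]
      exact div_le_div_of_nonneg_left hKpos.le hpos hle
    rw [add_div, h1]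
    linarith
  have hgT : g t ≤ (B / (β * T) + K / β) / r := le_trans hfin1 hfrac
  have hz0t : z t ⟨0, hn⟩ = x t ⟨0, hn⟩ - v t := by
    rw [hz_apply]; simp
  have h7 : ‖z t‖ ^ 2 ≤ g t / l1 := by
    rw [le_div_iff₀ hl1]
    have := hA1.V_lower (z t)
    linarith
  calc |x t ⟨0, hn⟩ - v t| ^ 2 = (z t ⟨0, hn⟩) ^ 2 := by rw [hz0t, sq_abs]
    _ ≤ ‖z t‖ ^ 2 := td_coord_sq_le n (z t) _
    _ ≤ g t / l1 := h7
    _ ≤ ((B / (β * T) + K / β) / r) / l1 := by gcongr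
    _ = ((B / (β * T) + K / β) / l1) / r := div_right_comm _ _ _
    _ ≤ ((B / (β * T) + K / β) / l1 + 1) / r := by gcongr; linarith
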